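/- Let p be an odd prime, let m₁, m₂ ∈ (ℤ/pℤ)^× with m₁ ≠ m₂, and suppose m₁ m₂^{−1} = a² for some a ∈ (ℤ/pℤ)^× (necessarily a ≠ 1 and a ≠ −1). Then for every t ∈ ℤ/pℤ, | ∑_{n ∈ ℤ/pℤ} ∑_{(x,y) ∈ (ℤ/pℤ)², x² = m₁ n, y² = m₂ n} e_p( 2(x − y) + t n ) | ≤ 2√p + 1. -/

import Mathlib

/-!
The solutions of `x² = m₁ n`, `y² = m₂ n` are the two lines `x = ± a y`, `n = m₂⁻¹ y²`, which
meet only at the origin. Summing over each line gives a complete sum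
`∑_y e_p(t m₂⁻¹ y² + c y)` with `c = 2(a - 1)` resp. `-2(a + 1)`, nonzero since `a ≠ ±1`.
Such a sum is a Ramanujan sum, hence `0`, when `t = 0`, and has modulus exactly `√p` otherwise:
expanding `|S|²` and shifting the summation variable leaves a linear character sum that only
survives on the diagonal.
-/

open Finset

/-- `e_p(a) = exp(2πi ã / p)` for `a : ZMod p`. -/
noncomputable def ep (p : ℕ) (a : ZMod p) : ℂ :=
  Complex.exp (2 * Real.pi * Complex.I * (a.val : ℂ) / p)

lemma ep_eq_stdAddChar (p : ℕ) [NeZero p] (a : ZMod p) : ep p a = ZMod.stdAddChar a := by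
  rw [ep, ZMod.stdAddChar_apply, ZMod.toCircle_apply]

section

variable {F M : Type*} [Field F] [AddCommGroup M]

open ComplexConjugate in
theorem norm_sum_addChar_quadratic [Fintype F] {ψ : AddChar F ℂ}
    (hψ : ψ.IsPrimitive) (h2 : (2 : F) ≠ 0) {d : F} (hd : d ≠ 0) (c : F) :
    ‖∑ v, ψ (d * v ^ 2 + c * v)‖ = √(Fintype.card F) := by
  classical
  set q : F → F := fun v => d * v ^ 2 + c * v
  have hshift (w h : F) : q (w + h) - q w = q h + w * (2 * d * h) := by simp only [q]; ring
  have hnormSq : Complex.normSq (∑ v, ψ (q v)) = Fintype.card F := by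
    apply Complex.ofReal_injective
    push_cast
    rw [← Complex.mul_conj, map_sum, sum_mul_sum, sum_comm]
    calc ∑ w, ∑ v, ψ (q v) * conj (ψ (q w))
        = ∑ w, ∑ h, ψ (q (w + h) - q w) := by
          refine sum_congr rfl fun w _ => ?_
          rw [← Equiv.sum_comp (Equiv.addLeft w)]
          simp [AddChar.map_sub_eq_div, ← AddChar.inv_apply_eq_conj, div_eq_mul_inv]
      _ = ∑ h, ψ (q h) * ∑ w, ψ (w * (2 * d * h)) := by
          simp_rw [hshift, AddChar.map_add_eq_mul, mul_sum]
          exact sum_comm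
      _ = Fintype.card F := by
          simp_rw [AddChar.sum_mulShift _ hψ, mul_eq_zero, h2, hd, false_or]
          simp [q]
  rw [Complex.norm_def, hnormSq]

theorem norm_sum_addChar_quadratic_le [Fintype F] {ψ : AddChar F ℂ}
    (hψ : ψ.IsPrimitive) (h2 : (2 : F) ≠ 0) {d c : F} (h : d ≠ 0 ∨ c ≠ 0) :
    ‖∑ v, ψ (d * v ^ 2 + c * v)‖ ≤ √(Fintype.card F) := by
  classical
  rcases eq_or_ne d 0 with rfl | hd
  · simp [mul_comm c, AddChar.sum_mulShift _ hψ, h.resolve_left (not_not_intro rfl)]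
  · exact (norm_sum_addChar_quadratic hψ h2 hd c).le

theorem sq_eq_mul_and_sq_eq_mul_iff {a m₁ m₂ : F} (hm₂ : m₂ ≠ 0) (hm : m₁ = a ^ 2 * m₂)
    (x y n : F) :
    (x ^ 2 = m₁ * n ∧ y ^ 2 = m₂ * n) ↔ (n = y ^ 2 / m₂ ∧ (x = a * y ∨ x = -(a * y))) := by
  rw [eq_div_iff hm₂, mul_comm n, eq_comm (b := y ^ 2), hm, ← sq_eq_sq_iff_eq_or_eq_neg]
  constructor
  · rintro ⟨hx, hy⟩
    exact ⟨hy, by rw [hx, mul_pow, hy]; ring⟩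
  · rintro ⟨hy, hx⟩
    exact ⟨by rw [hx, mul_pow, hy]; ring, hy⟩

theorem sum_pair_neg [DecidableEq F] (h2 : (2 : F) ≠ 0) (u : F) (g : F → M) :
    ∑ x ∈ {u, -u}, g x = g u + g (-u) - if u = 0 then g 0 else 0 := by
  rcases eq_or_ne u 0 with rfl | hu
  · simp
  · rw [sum_pair, if_neg hu, sub_zero]
    intro h
    exact hu (by simpa [h2] using (show 2 * u = 0 by linear_combination h))

theorem sum_sq_eq_mul_and_sq_eq_mul [Fintype F] [DecidableEq F] (h2 : (2 : F) ≠ 0) {a m₁ m₂ : F}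
    (ha : a ≠ 0) (hm₂ : m₂ ≠ 0) (hm : m₁ = a ^ 2 * m₂) (f : F × F → F → M) :
    ∑ n, ∑ xy ∈ univ.filter (fun xy : F × F => xy.1 ^ 2 = m₁ * n ∧ xy.2 ^ 2 = m₂ * n), f xy n =
      ∑ y, f (a * y, y) (y ^ 2 / m₂) + ∑ y, f (-(a * y), y) (y ^ 2 / m₂) - f (0, 0) 0 := by
  simp_rw [sum_filter, sq_eq_mul_and_sq_eq_mul_iff hm₂ hm, ite_and]
  rw [sum_comm]
  simp_rw [sum_ite_eq', mem_univ, if_true]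
  rw [Fintype.sum_prod_type_right]
  simp_rw [← sum_filter, filter_or, filter_eq', mem_univ, if_true, ← insert_eq]
  simp_rw [sum_pair_neg h2, sum_sub_distrib, sum_add_distrib, mul_eq_zero, ha, false_or,
    sum_ite_eq', mem_univ, if_true]
  simp

theorem norm_sum_addChar_sq_eq_mul_le [Fintype F] [DecidableEq F] {ψ : AddChar F ℂ}
    (hψ : ψ.IsPrimitive) (h2 : (2 : F) ≠ 0) {a m₁ m₂ : F} (ha : a ≠ 0) (hm₂ : m₂ ≠ 0)
    (hm : m₁ = a ^ 2 * m₂) (ha_sq : a ^ 2 ≠ 1) (t : F) :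
    ‖∑ n, ∑ xy ∈ univ.filter (fun xy : F × F => xy.1 ^ 2 = m₁ * n ∧ xy.2 ^ 2 = m₂ * n),
        ψ (2 * (xy.1 - xy.2) + t * n)‖ ≤ 2 * √(Fintype.card F) + 1 := by
  have hc₁ : 2 * (a - 1) ≠ 0 :=
    mul_ne_zero h2 fun h => ha_sq (by linear_combination (a + 1) * h)
  have hc₂ : -2 * (a + 1) ≠ 0 :=
    mul_ne_zero (neg_ne_zero.2 h2) fun h => ha_sq (by linear_combination (a - 1) * h)
  have hline₁ (y : F) :
      2 * (a * y - y) + t * (y ^ 2 / m₂) = t / m₂ * y ^ 2 + 2 * (a - 1) * y := by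
    ring
  have hline₂ (y : F) :
      2 * (-(a * y) - y) + t * (y ^ 2 / m₂) = t / m₂ * y ^ 2 + -2 * (a + 1) * y := by
    ring
  rw [sum_sq_eq_mul_and_sq_eq_mul h2 ha hm₂ hm]
  simp only [hline₁, hline₂, sub_self, mul_zero, add_zero, AddChar.map_zero_eq_one]
  calc _ ≤ ‖∑ y, ψ (t / m₂ * y ^ 2 + 2 * (a - 1) * y)‖
          + ‖∑ y, ψ (t / m₂ * y ^ 2 + -2 * (a + 1) * y)‖ + ‖(1 : ℂ)‖ :=
        norm_sub_le_of_le (norm_add_le _ _) le_rfl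
    _ ≤ √(Fintype.card F) + √(Fintype.card F) + 1 := by
        gcongr
        exacts [norm_sum_addChar_quadratic_le hψ h2 (.inr hc₁),
          norm_sum_addChar_quadratic_le hψ h2 (.inr hc₂), norm_one.le]
    _ = 2 * √(Fintype.card F) + 1 := by ring

end

/-- The complete exponential sum arising in Lemma 5.8: for `m₁ ≠ m₂` units mod `p`
with `m₁ m₂⁻¹` a square, and any `t`,
`|∑_n ∑_{x² = m₁ n, y² = m₂ n} e_p(2(x − y) + t n)| ≤ 2√p + 1`. -/
theorem stmt14 (p : ℕ) [Fact p.Prime] (hodd : Odd p) (m₁ m₂ : (ZMod p)ˣ) (hne : m₁ ≠ m₂)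
    (hsq : ∃ a : (ZMod p)ˣ, m₁ * m₂⁻¹ = a^2) (t : ZMod p) :
    ‖∑ n : ZMod p,
      ∑ xy ∈ Finset.univ.filter (fun xy : ZMod p × ZMod p =>
          xy.1^2 = (m₁ : ZMod p) * n ∧ xy.2^2 = (m₂ : ZMod p) * n),
        ep p (2 * (xy.1 - xy.2) + t * n)‖
      ≤ 2 * Real.sqrt p + 1 := by
  obtain ⟨a, ha⟩ := hsq
  have h2 : (2 : ZMod p) ≠ 0 := Ring.two_ne_zero <| by
    rw [ZMod.ringChar_zmod_n]; rintro rfl; exact Nat.not_even_iff_odd.2 hodd even_two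
  have hm : (m₁ : ZMod p) = (a : ZMod p) ^ 2 * m₂ := by
    rw [← Units.val_pow_eq_pow_val, ← ha, ← Units.val_mul, inv_mul_cancel_right]
  have ha_sq : (a : ZMod p) ^ 2 ≠ 1 := fun h => hne (Units.ext (by rw [hm, h, one_mul]))
  simp_rw [ep_eq_stdAddChar]
  simpa using norm_sum_addChar_sq_eq_mul_le (ZMod.isPrimitive_stdAddChar p) h2 a.ne_zero
    m₂.ne_zero hm ha_sq t
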